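/- arXiv:2507.16762 — 2 statements merged into one kernel-verified Lean document; each statement's English description precedes it below -/
import Mathlib

section
/- A measure space (Ω, 𝒜, μ) satisfies inf{μ(A) : A ∈ 𝒜, μ(A) > 0} = 0 if and only if there exists a countable family of mutually disjoint measurable sets (A_n) with μ(A_n) > 0 for all n and lim_{n→∞} μ(A_n) = 0. -/
open MeasureTheory Set Filter Function
open scoped ENNReal Topology

/-!
If sets of arbitrarily small positive measure exist, pick `B₀, B₁, …` among them with
`μ (Bₙ₊₁) < μ Bₙ / 2`. The tail `⋃ k, B (n + k + 1)` then has measure at most `2 μ (Bₙ₊₁) < μ Bₙ`,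
so removing it from `Bₙ` leaves a set `Aₙ` of positive measure; the `Aₙ` are pairwise disjoint and
`μ Aₙ ≤ μ Bₙ → 0`. The converse is immediate.
-/

theorem ENNReal.tsum_tail_lt_of_lt_half {a : ℕ → ℝ≥0∞} (h : ∀ n, a (n + 1) < a n / 2) (n : ℕ) :
    ∑' k, a (n + k + 1) < a n := by
  have hdecay : ∀ m k, a (m + k) ≤ 2⁻¹ ^ k * a m := by
    intro m k
    induction k with
    | zero => simp
    | succ k ih =>
      calc a (m + (k + 1)) ≤ a (m + k) / 2 := (h (m + k)).le
        _ = 2⁻¹ * a (m + k) := ENNReal.div_eq_inv_mul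
        _ ≤ 2⁻¹ * (2⁻¹ ^ k * a m) := by gcongr
        _ = 2⁻¹ ^ (k + 1) * a m := by rw [pow_succ', mul_assoc]
  calc ∑' k, a (n + k + 1) = ∑' k, a (n + 1 + k) := by simp only [add_right_comm]
    _ ≤ ∑' k, 2⁻¹ ^ k * a (n + 1) := ENNReal.tsum_le_tsum (hdecay (n + 1))
    _ = 2 * a (n + 1) := by
      rw [ENNReal.tsum_mul_right, ENNReal.tsum_geometric, ENNReal.one_sub_inv_two, inv_inv]
    _ < a n := by
      rw [mul_comm]
      exact (ENNReal.lt_div_iff_mul_lt (by simp) (by simp)).1 (h n)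

theorem pairwise_disjoint_diff_iUnion_tail {α : Type*} (B : ℕ → Set α) :
    Pairwise (Disjoint on fun n => B n \ ⋃ k, B (n + k + 1)) := by
  refine (pairwise_disjoint_on _).2 fun m n hmn => ?_
  refine disjoint_sdiff_left.mono_right (sdiff_subset.trans ?_)
  exact subset_iUnion_of_subset (n - m - 1) (by rw [show m + (n - m - 1) + 1 = n by omega])

section

variable {Ω : Type*} [MeasurableSpace Ω] {μ : Measure Ω}

theorem sInf_pos_measure_eq_zero_iff_forall_exists_lt :
    sInf {m : ℝ≥0∞ | ∃ A : Set Ω, MeasurableSet A ∧ 0 < μ A ∧ μ A = m} = 0 ↔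
      ∀ c > 0, ∃ A : Set Ω, MeasurableSet A ∧ 0 < μ A ∧ μ A < c := by
  rw [← ENNReal.bot_eq_zero, sInf_eq_bot]
  refine forall₂_congr fun c _ => ⟨?_, ?_⟩
  · rintro ⟨_, ⟨A, hA, hpos, rfl⟩, hlt⟩
    exact ⟨A, hA, hpos, hlt⟩
  · rintro ⟨A, hA, hpos, hlt⟩
    exact ⟨_, ⟨A, hA, hpos, rfl⟩, hlt⟩

theorem exists_seq_pos_measure_lt_half
    (h : ∀ c > 0, ∃ A : Set Ω, MeasurableSet A ∧ 0 < μ A ∧ μ A < c) :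
    ∃ B : ℕ → Set Ω, (∀ n, MeasurableSet (B n)) ∧ (∀ n, 0 < μ (B n)) ∧ μ (B 0) < 1 ∧
      ∀ n, μ (B (n + 1)) < μ (B n) / 2 := by
  obtain ⟨s, hs, hs_pos, hs_lt⟩ := h 1 one_pos
  choose! next hnext_meas hnext_pos hnext_lt using
    fun t : Set Ω => fun ht : 0 < μ t => h _ (ENNReal.half_pos ht.ne')
  have hpos : ∀ n, 0 < μ (next^[n] s) := by
    intro n
    induction n with
    | zero => exact hs_pos
    | succ n ih => rw [iterate_succ_apply']; exact hnext_pos _ ih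
  refine ⟨fun n => next^[n] s, fun n => ?_, hpos, hs_lt, fun n => ?_⟩
  · cases n with
    | zero => exact hs
    | succ n => simpa only [iterate_succ_apply'] using hnext_meas _ (hpos n)
  · simpa only [iterate_succ_apply'] using hnext_lt _ (hpos n)

theorem exists_pairwise_disjoint_pos_measure_tendsto_zero
    (h : ∀ c > 0, ∃ A : Set Ω, MeasurableSet A ∧ 0 < μ A ∧ μ A < c) :
    ∃ A : ℕ → Set Ω, (∀ n, MeasurableSet (A n)) ∧ (∀ n, 0 < μ (A n)) ∧
      Pairwise (Disjoint on A) ∧ Tendsto (fun n => μ (A n)) atTop (𝓝 0) := by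
  obtain ⟨B, hmeas, hpos, hB0, hhalf⟩ := exists_seq_pos_measure_lt_half h
  have htail : ∀ n, μ (⋃ k, B (n + k + 1)) < μ (B n) := fun n =>
    (measure_iUnion_le _).trans_lt (ENNReal.tsum_tail_lt_of_lt_half hhalf n)
  have hB : Tendsto (fun n => μ (B n)) atTop (𝓝 0) := by
    refine (tendsto_add_atTop_iff_nat 1).1 (ENNReal.tendsto_atTop_zero_of_tsum_ne_top ?_)
    simpa using ((ENNReal.tsum_tail_lt_of_lt_half hhalf 0).trans hB0).ne_top
  refine ⟨fun n => B n \ ⋃ k, B (n + k + 1), fun n => (hmeas n).diff (.iUnion fun _ => hmeas _),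
    fun n => (tsub_pos_of_lt (htail n)).trans_le le_measure_sdiff,
    pairwise_disjoint_diff_iUnion_tail B, ?_⟩
  exact tendsto_of_tendsto_of_tendsto_of_le_of_le tendsto_const_nhds hB (fun _ => zero_le)
    fun n => measure_mono sdiff_subset

end

/-- A measure space satisfies `inf {μ A : μ A > 0} = 0` iff there is a countable family
of mutually disjoint measurable sets of positive measure whose measures tend to `0`. -/
theorem sInf_pos_measure_eq_zero_iff
    {Ω : Type*} [MeasurableSpace Ω] (μ : Measure Ω) :
    sInf {m : ENNReal | ∃ A : Set Ω, MeasurableSet A ∧ 0 < μ A ∧ μ A = m} = 0 ↔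
      ∃ A : ℕ → Set Ω, (∀ n, MeasurableSet (A n)) ∧ (∀ n, 0 < μ (A n)) ∧
        Pairwise (Function.onFun Disjoint A) ∧
        Tendsto (fun n => μ (A n)) atTop (nhds 0) := by
  rw [sInf_pos_measure_eq_zero_iff_forall_exists_lt]
  refine ⟨exists_pairwise_disjoint_pos_measure_tendsto_zero, ?_⟩
  rintro ⟨A, hmeas, hpos, -, htend⟩ c hc
  obtain ⟨n, hn⟩ := ((tendsto_order.1 htend).2 c hc).exists
  exact ⟨A n, hmeas n, hpos n, hn⟩
end

section
/- Let X be a metrizable separable topological vector space over ℝ, α an infinite cardinal, and A, B ⊆ X with A + B ⊆ A, A ∩ B = ∅, A α-lineable (there is a subspace V of dimension α with V ∖ {0} ⊆ A), and B dense-lineable (there is a dense subspace W with W ∖ {0} ⊆ B). Then A is α-dense-lineable: there is a dense subspace U of dimension α with U ∖ {0} ⊆ A. -/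
/-!
Take a basis `(vᵢ)_{i ∈ ι}` of `V`, with `#ι = α`, and a dense sequence `(dₘ)` in `W`.
Perturb the basis to `gᵢ = σᵢ vᵢ + wᵢ` with `σᵢ ≠ 0` and `wᵢ ∈ W`, where countably many indices
are used to make `gᵢ` converge to each `dₘ` (this needs `σᵢ vᵢ → 0`, possible in a first countable
space), so that the `gᵢ` have dense range. A nonzero combination of the `gᵢ` is `x + y` with
`x ∈ V ∖ {0} ⊆ A` and `y ∈ W`; either `y = 0`, or `y ∈ B` and `x + y ∈ A + B ⊆ A`, and `x + y ≠ 0`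
since otherwise `y = -x ∈ A ∩ B`. Hence the `gᵢ` are linearly independent and span the required
dense subspace of dimension `α` inside `A ∪ {0}`.
-/

open Filter Function Set Pointwise Topology TopologicalSpace

section Algebra

variable {R M ι : Type*} [Ring R] [AddCommGroup M] [Module R M]
  {A B : Set M} {V W : Submodule R M}

theorem add_mem_diff_zero_of_mem_diff_zero (hAB : A + B ⊆ A) (hdisj : A ∩ B = ∅)
    (hVA : (V : Set M) \ {0} ⊆ A) (hWB : (W : Set M) \ {0} ⊆ B)
    {x y : M} (hx : x ∈ (V : Set M) \ {0}) (hy : y ∈ W) : x + y ∈ A \ {0} := by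
  obtain ⟨hxV, hx0⟩ := hx
  have hxA : x ∈ A := hVA ⟨hxV, hx0⟩
  rcases eq_or_ne y 0 with rfl | hy0
  · simpa using ⟨hxA, hx0⟩
  have hyB : y ∈ B := hWB ⟨hy, hy0⟩
  refine ⟨hAB (add_mem_add hxA hyB), fun hxy => ?_⟩
  have hyA : y ∈ A := by
    rw [eq_neg_of_add_eq_zero_right hxy]
    exact hVA ⟨V.neg_mem hxV, by simpa using hx0⟩
  exact (Set.eq_empty_iff_forall_notMem.mp hdisj) y ⟨hyA, hyB⟩

theorem Submodule.linearCombination_mem {v : ι → M} (hvV : ∀ i, v i ∈ V) (l : ι →₀ R) :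
    Finsupp.linearCombination R v l ∈ V :=
  Submodule.sum_mem V fun i _ => V.smul_mem _ (hvV i)

theorem linearCombination_mem_diff_zero_of_sub_mem (hAB : A + B ⊆ A) (hdisj : A ∩ B = ∅)
    (hVA : (V : Set M) \ {0} ⊆ A) (hWB : (W : Set M) \ {0} ⊆ B)
    {v g : ι → M} (hv : LinearIndependent R v) (hvV : ∀ i, v i ∈ V) (hgW : ∀ i, g i - v i ∈ W)
    {l : ι →₀ R} (hl : l ≠ 0) : Finsupp.linearCombination R g l ∈ A \ {0} := by
  have hsplit : Finsupp.linearCombination R g l =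
      Finsupp.linearCombination R v l + Finsupp.linearCombination R (g - v) l := by
    simp only [Finsupp.linearCombination_apply, ← Finsupp.sum_add, Pi.sub_apply, smul_sub,
      add_sub_cancel]
  rw [hsplit]
  exact add_mem_diff_zero_of_mem_diff_zero hAB hdisj hVA hWB
    ⟨V.linearCombination_mem hvV l, fun h => hl (linearIndependent_iff.mp hv l h)⟩
    (W.linearCombination_mem hgW l)

theorem linearIndependent_and_span_diff_zero_subset_of_sub_mem (hAB : A + B ⊆ A)
    (hdisj : A ∩ B = ∅) (hVA : (V : Set M) \ {0} ⊆ A) (hWB : (W : Set M) \ {0} ⊆ B)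
    {v g : ι → M} (hv : LinearIndependent R v) (hvV : ∀ i, v i ∈ V) (hgW : ∀ i, g i - v i ∈ W) :
    LinearIndependent R g ∧ (Submodule.span R (range g) : Set M) \ {0} ⊆ A := by
  have key := fun l (hl : l ≠ 0) =>
    linearCombination_mem_diff_zero_of_sub_mem hAB hdisj hVA hWB hv hvV hgW hl
  refine ⟨linearIndependent_iff.mpr fun l hl => by_contra fun hl0 => (key l hl0).2 hl, ?_⟩
  rintro x ⟨hx, hx0⟩
  obtain ⟨l, rfl⟩ := Finsupp.mem_span_range_iff_exists_finsupp.mp hx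
  have hl : l ≠ 0 := by rintro rfl; simp at hx0
  exact (key l hl).1

end Algebra

theorem Function.extend_mem {α β γ : Type*} {f : α → β} {g : α → γ} {e' : β → γ} {s : Set γ}
    (hg : ∀ a, g a ∈ s) (he' : ∀ b, e' b ∈ s) (b : β) : extend f g e' b ∈ s := by
  classical
  rw [extend_def]
  split_ifs
  exacts [hg _, he' b]

theorem Dense.exists_denseRange_seq_mem {X : Type*} [TopologicalSpace X] [PseudoMetrizableSpace X]
    [SeparableSpace X] [Nonempty X] {D : Set X} (hD : Dense D) :
    ∃ d : ℕ → X, DenseRange d ∧ ∀ n, d n ∈ D := by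
  have : SeparableSpace D := (IsSeparable.of_separableSpace D).separableSpace
  have : Nonempty D := hD.nonempty.to_subtype
  obtain ⟨u, hu⟩ := exists_dense_seq D
  exact ⟨fun n => u n, hD.denseRange_val.comp hu continuous_subtype_val, fun n => (u n).2⟩

section Topology

variable {𝕜 X : Type*} [NontriviallyNormedField 𝕜] [AddCommGroup X] [Module 𝕜 X]
  [TopologicalSpace X] [ContinuousSMul 𝕜 X]

theorem exists_ne_zero_smul_tendsto_zero [FirstCountableTopology X] (v : ℕ → X) :
    ∃ t : ℕ → 𝕜, (∀ k, t k ≠ 0) ∧ Tendsto (fun k => t k • v k) atTop (𝓝 0) := by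
  obtain ⟨U, hU⟩ := (𝓝 (0 : X)).exists_antitone_basis
  have hsmall : ∀ k, ∃ t : 𝕜, t ≠ 0 ∧ t • v k ∈ U k := fun k =>
    have hcont : Tendsto (fun t : 𝕜 => t • v k) (𝓝[≠] 0) (𝓝 0) := by
      simpa using ((tendsto_id (x := 𝓝 (0 : 𝕜))).mono_left nhdsWithin_le_nhds).smul_const (v k)
    (eventually_mem_nhdsWithin.and (hcont.eventually_mem (hU.mem k))).exists
  choose t ht0 htU using hsmall
  exact ⟨t, ht0, hU.tendsto htU⟩

theorem exists_denseRange_smul_add [FirstCountableTopology X] [ContinuousAdd X]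
    {ι : Type*} [Infinite ι] (v : ι → X) {d : ℕ → X} (hd : DenseRange d) :
    ∃ σ : ι → 𝕜, (∀ i, σ i ≠ 0) ∧ ∃ w : ι → X, (∀ i, w i ∈ range d) ∧
      DenseRange fun i => σ i • v i + w i := by
  set f := Infinite.natEmbedding ι
  obtain ⟨t, ht0, ht⟩ := exists_ne_zero_smul_tendsto_zero (𝕜 := 𝕜) (v ∘ f)
  -- the indices `f (Nat.pair m k)`, `k ∈ ℕ`, carry perturbations of `d m` tending to `d m`
  refine ⟨extend f t 1, extend_mem (s := {0}ᶜ) ht0 fun _ => one_ne_zero,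
    extend f (fun n => d n.unpair.1) fun _ => d 0, extend_mem (fun _ => mem_range_self _)
      fun _ => mem_range_self _, ?_⟩
  set g := fun i => extend f t 1 i • v i + extend f (fun n => d n.unpair.1) (fun _ => d 0) i
  have hlim : ∀ m, Tendsto (fun k => g (f (Nat.pair m k))) atTop (𝓝 (d m)) := by
    intro m
    have hpair : Tendsto (Nat.pair m) atTop atTop :=
      tendsto_atTop_mono (Nat.right_le_pair m) tendsto_id
    simpa [g, f.injective.extend_apply] using (ht.comp hpair).add_const (d m)
  exact dense_closure.mp <| hd.mono <| range_subset_iff.mpr fun m =>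
    mem_closure_of_tendsto (hlim m) (.of_forall fun _ => mem_range_self _)

end Topology

/-- Transfer of dense lineability: in a metrizable separable topological vector space,
if `A + B ⊆ A`, `A ∩ B = ∅`, `A` is `α`-lineable and `B` is dense-lineable, then `A`
is `α`-dense-lineable. -/
theorem alpha_dense_lineable_of_lineable
    {X : Type*} [AddCommGroup X] [Module ℝ X] [TopologicalSpace X]
    [IsTopologicalAddGroup X] [ContinuousSMul ℝ X]
    [TopologicalSpace.MetrizableSpace X] [TopologicalSpace.SeparableSpace X]
    (α : Cardinal) (hα : Cardinal.aleph0 ≤ α)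
    (A B : Set X)
    (hAB : A + B ⊆ A)
    (hdisj : A ∩ B = ∅)
    (hAlin : ∃ V : Submodule ℝ X, Module.rank ℝ V = α ∧ (V : Set X) \ {0} ⊆ A)
    (hBlin : ∃ W : Submodule ℝ X, Dense (W : Set X) ∧ (W : Set X) \ {0} ⊆ B) :
    ∃ U : Submodule ℝ X, Dense (U : Set X) ∧ Module.rank ℝ U = α ∧
      (U : Set X) \ {0} ⊆ A := by
  obtain ⟨V, hVrank, hVA⟩ := hAlin
  obtain ⟨W, hWdense, hWB⟩ := hBlin
  let b := Module.Basis.ofVectorSpace ℝ V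
  have hcard : Cardinal.mk (Module.Basis.ofVectorSpaceIndex ℝ V) = α := by
    rw [b.mk_eq_rank'', hVrank]
  have : Infinite (Module.Basis.ofVectorSpaceIndex ℝ V) := Cardinal.infinite_iff.mpr (hcard ▸ hα)
  obtain ⟨d, hd, hdW⟩ := hWdense.exists_denseRange_seq_mem
  obtain ⟨σ, hσ, w, hw, hdense⟩ := exists_denseRange_smul_add (𝕜 := ℝ) (fun i => (b i : X)) hd
  have hv : LinearIndependent ℝ fun i => σ i • (b i : X) :=
    (b.linearIndependent.map' V.subtype V.ker_subtype).units_smul fun i => Units.mk0 _ (hσ i)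
  obtain ⟨hg, hgA⟩ := linearIndependent_and_span_diff_zero_subset_of_sub_mem hAB hdisj hVA hWB hv
    (g := fun i => σ i • (b i : X) + w i) (fun i => V.smul_mem _ (b i).2) fun i => by
      obtain ⟨n, hn⟩ := hw i
      simpa [← hn] using hdW n
  refine ⟨Submodule.span ℝ (range _), hdense.mono Submodule.subset_span, ?_, hgA⟩
  rw [rank_span hg, Cardinal.mk_range_eq _ hg.injective, hcard]
end
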